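/- Let m be a positive natural number, let μ ∈ ℝ^m, let Σ be a real symmetric positive definite m×m matrix, and let r > 0 and Q > m/2 be reals. Define v(x) = (x−μ)ᵀ Σ⁻¹ (x−μ). Then the Pearson type VII function f(x) = [Γ(Q) (det Σ)^{-1/2} / ((rπ)^{m/2} Γ((2Q−m)/2))] · (1 + v(x)/r)^{-Q} is a probability density on ℝ^m, i.e., f is nonnegative and ∫_{ℝ^m} f(x) dx = 1. -/

import Mathlib

open MeasureTheory Matrix Set Real

/-!
Translating by `μ` and substituting `x = √S y` (positive square root) turns the quadratic form
into `‖y‖²` at the cost of the Jacobian `√(det S)`, so everything reduces to the radial integral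
`∫ (1 + ‖y‖² / r) ^ (-Q)` over `ℝ^m`. That one is computed by subordination to Gaussians:
`Γ(Q) (1 + s) ^ (-Q) = ∫₀^∞ t ^ (Q - 1) e ^ (-(1 + s) t) dt`; after Tonelli the inner Gaussian
integral contributes `(π r / t) ^ (m / 2)`, and the remaining Gamma integral gives
`(r π) ^ (m / 2) Γ(Q - m / 2)`.
-/

lemma lintegral_rpow_mul_exp_neg_mul_Ioi {a s : ℝ} (ha : 0 < a) (hs : 0 < s) :
    ∫⁻ t in Ioi (0 : ℝ), ENNReal.ofReal (t ^ (a - 1) * rexp (-(s * t)))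
      = ENNReal.ofReal (s ^ (-a)) * ENNReal.ofReal (Gamma a) := by
  have h := integral_rpow_mul_exp_neg_mul_Ioi ha hs
  rw [one_div, inv_rpow hs.le, ← rpow_neg hs.le] at h
  have hΓ := Gamma_pos_of_pos ha
  rw [← ENNReal.ofReal_mul (by positivity), ← h, ofReal_integral_eq_lintegral_ofReal
    (.of_integral_ne_zero (by rw [h]; positivity))]
  exact (ae_restrict_iff' measurableSet_Ioi).2 (.of_forall fun t (ht : 0 < t) => by positivity)

section
variable {V : Type*} [NormedAddCommGroup V] [InnerProductSpace ℝ V] [FiniteDimensional ℝ V]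
  [MeasurableSpace V] [BorelSpace V]

lemma lintegral_exp_neg_mul_sq_norm {b : ℝ} (hb : 0 < b) :
    ∫⁻ v : V, ENNReal.ofReal (rexp (-b * ‖v‖ ^ 2))
      = ENNReal.ofReal ((π / b) ^ (Module.finrank ℝ V / 2 : ℝ)) := by
  have h := GaussianFourier.integral_rexp_neg_mul_sq_norm (V := V) hb
  rw [← h, ofReal_integral_eq_lintegral_ofReal
    (.of_integral_ne_zero (by rw [h]; positivity)) (.of_forall fun _ => by positivity)]

lemma lintegral_rpow_mul_exp_neg_one_add_sq_norm_div_mul {r t : ℝ} (hr : 0 < r) (ht : 0 < t)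
    (a : ℝ) :
    ∫⁻ v : V, ENNReal.ofReal (t ^ (a - 1) * rexp (-((1 + ‖v‖ ^ 2 / r) * t)))
      = ENNReal.ofReal ((r * π) ^ ((Module.finrank ℝ V : ℝ) / 2))
        * ENNReal.ofReal (t ^ (a - Module.finrank ℝ V / 2 - 1) * rexp (-t)) := by
  have hfactor : ∀ v : V, t ^ (a - 1) * rexp (-((1 + ‖v‖ ^ 2 / r) * t))
      = t ^ (a - 1) * rexp (-t) * rexp (-(t / r) * ‖v‖ ^ 2) := fun v => by
    rw [mul_assoc, ← exp_add]; ring_nf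
  simp_rw [hfactor, ENNReal.ofReal_mul (p := t ^ (a - 1) * rexp (-t)) (by positivity)]
  rw [lintegral_const_mul' _ _ ENNReal.ofReal_ne_top,
    lintegral_exp_neg_mul_sq_norm (by positivity), ← ENNReal.ofReal_mul (by positivity),
    ← ENNReal.ofReal_mul (by positivity), div_div_eq_mul_div, div_rpow (by positivity) ht.le,
    sub_right_comm, rpow_sub ht (a - 1)]
  ring_nf

theorem integral_one_add_sq_norm_div_rpow_neg {r Q : ℝ} (hr : 0 < r)
    (hQ : (Module.finrank ℝ V : ℝ) / 2 < Q) :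
    ∫ v : V, (1 + ‖v‖ ^ 2 / r) ^ (-Q)
      = (r * π) ^ ((Module.finrank ℝ V : ℝ) / 2) * Gamma (Q - Module.finrank ℝ V / 2)
        / Gamma Q := by
  set d : ℝ := (Module.finrank ℝ V : ℝ)
  have hQ0 : 0 < Q := lt_of_le_of_lt (by positivity) hQ
  have hΓ : 0 < Gamma Q := Gamma_pos_of_pos hQ0
  have hΓ' : 0 < Gamma (Q - d / 2) := Gamma_pos_of_pos (sub_pos.2 hQ)
  have key : (∫⁻ v : V, ENNReal.ofReal ((1 + ‖v‖ ^ 2 / r) ^ (-Q))) * ENNReal.ofReal (Gamma Q)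
      = ENNReal.ofReal ((r * π) ^ (d / 2)) * ENNReal.ofReal (Gamma (Q - d / 2)) := by
    calc _ = ∫⁻ v : V, ∫⁻ t in Ioi (0 : ℝ),
            ENNReal.ofReal (t ^ (Q - 1) * rexp (-((1 + ‖v‖ ^ 2 / r) * t))) := by
          rw [← lintegral_mul_const' _ _ ENNReal.ofReal_ne_top]
          exact lintegral_congr fun v =>
            (lintegral_rpow_mul_exp_neg_mul_Ioi hQ0 (by positivity)).symm
      _ = ∫⁻ t in Ioi (0 : ℝ), ∫⁻ v : V,
            ENNReal.ofReal (t ^ (Q - 1) * rexp (-((1 + ‖v‖ ^ 2 / r) * t))) :=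
          lintegral_lintegral_swap (by fun_prop)
      _ = ∫⁻ t in Ioi (0 : ℝ), ENNReal.ofReal ((r * π) ^ (d / 2))
            * ENNReal.ofReal (t ^ (Q - d / 2 - 1) * rexp (-t)) :=
          setLIntegral_congr_fun measurableSet_Ioi fun t ht =>
            lintegral_rpow_mul_exp_neg_one_add_sq_norm_div_mul hr ht Q
      _ = _ := by
          have hgamma := lintegral_rpow_mul_exp_neg_mul_Ioi (sub_pos.2 hQ) one_pos
          simp only [one_mul, one_rpow, ENNReal.ofReal_one] at hgamma
          rw [lintegral_const_mul' _ _ ENNReal.ofReal_ne_top, hgamma]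
  have hnonneg : 0 ≤ᵐ[volume] fun v : V => (1 + ‖v‖ ^ 2 / r) ^ (-Q) :=
    .of_forall fun v => by positivity
  rw [eq_div_iff hΓ.ne', integral_eq_lintegral_of_nonneg_ae hnonneg
      (Measurable.aestronglyMeasurable (by fun_prop)),
    ← ENNReal.toReal_ofReal hΓ.le, ← ENNReal.toReal_mul, key,
    ← ENNReal.ofReal_mul (by positivity), ENNReal.toReal_ofReal (by positivity)]
end

section
variable {ι E : Type*} [Fintype ι] [NormedAddCommGroup E] [NormedSpace ℝ E]

theorem integral_comp_mulVec [DecidableEq ι] {M : Matrix ι ι ℝ} (hM : M.det ≠ 0)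
    (f : (ι → ℝ) → E) :
    ∫ y, f (M *ᵥ y) = |M.det|⁻¹ • ∫ x, f x := by
  have hL : LinearMap.det (toLin' M) ≠ 0 := by rwa [LinearMap.det_toLin']
  have hemb : MeasurableEmbedding (toLin' M) :=
    ((toLin' M).equivOfDetNeZero hL).toContinuousLinearEquiv.toHomeomorph.measurableEmbedding
  have h := hemb.integral_map (μ := volume) f
  rw [Real.map_matrix_volume_pi_eq_smul_volume_pi hM, integral_smul_measure,
    ENNReal.toReal_ofReal (by positivity)] at h
  simpa using h.symm

theorem integral_dotProduct_self_eq_integral_norm_sq (g : ℝ → E) :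
    ∫ x : ι → ℝ, g (x ⬝ᵥ x) = ∫ y : EuclideanSpace ℝ ι, g (‖y‖ ^ 2) := by
  rw [← (EuclideanSpace.volume_preserving_symm_measurableEquiv_toLp ι).integral_comp']
  congr with y
  rw [← real_inner_self_eq_norm_sq, EuclideanSpace.inner_eq_star_dotProduct]
  simp

open scoped MatrixOrder in
theorem Matrix.PosDef.sqrt_mul_inv_mul_sqrt [DecidableEq ι] {S : Matrix ι ι ℝ}
    (hS : S.PosDef) :
    CFC.sqrt S * S⁻¹ * CFC.sqrt S = 1 := by
  set A := CFC.sqrt S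
  have hA : IsUnit A.det := by
    rw [hS.posSemidef.det_sqrt, RCLike.sqrt_real]
    exact (Real.sqrt_pos.2 hS.det_pos).ne'.isUnit
  rw [← CFC.sqrt_mul_sqrt_self S hS.posSemidef.nonneg, Matrix.mul_inv_rev, ← Matrix.mul_assoc,
    mul_nonsing_inv A hA, Matrix.one_mul, nonsing_inv_mul A hA]

open scoped MatrixOrder in
theorem Matrix.PosDef.integral_comp_dotProduct_inv_mulVec [DecidableEq ι] {S : Matrix ι ι ℝ}
    (hS : S.PosDef) (μ : ι → ℝ) (g : ℝ → E) :
    ∫ x, g ((x - μ) ⬝ᵥ (S⁻¹ *ᵥ (x - μ))) = √S.det • ∫ y : EuclideanSpace ℝ ι, g (‖y‖ ^ 2) := by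
  set A := CFC.sqrt S
  have hdetA : A.det = √S.det := by rw [hS.posSemidef.det_sqrt, RCLike.sqrt_real]
  have hAsymm : Aᵀ = A := (CFC.sqrt_nonneg S).posSemidef.isHermitian
  have hquad : ∀ y, (A *ᵥ y) ⬝ᵥ (S⁻¹ *ᵥ (A *ᵥ y)) = y ⬝ᵥ y := fun y => by
    rw [mulVec_mulVec, dotProduct_mulVec, vecMul_mulVec, hAsymm, ← Matrix.mul_assoc,
      hS.sqrt_mul_inv_mul_sqrt, vecMul_one]
  have hdetA_pos : 0 < A.det := hdetA ▸ Real.sqrt_pos.2 hS.det_pos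
  calc ∫ x, g ((x - μ) ⬝ᵥ (S⁻¹ *ᵥ (x - μ)))
      = ∫ x, g (x ⬝ᵥ (S⁻¹ *ᵥ x)) := integral_sub_right_eq_self (fun x => g (x ⬝ᵥ (S⁻¹ *ᵥ x))) μ
    _ = A.det • ∫ y, g ((A *ᵥ y) ⬝ᵥ (S⁻¹ *ᵥ (A *ᵥ y))) := by
      rw [integral_comp_mulVec hdetA_pos.ne' fun x => g (x ⬝ᵥ (S⁻¹ *ᵥ x)),
        abs_of_pos hdetA_pos, smul_inv_smul₀ hdetA_pos.ne']
    _ = √S.det • ∫ y : EuclideanSpace ℝ ι, g (‖y‖ ^ 2) := by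
      simp_rw [hquad, hdetA, integral_dotProduct_self_eq_integral_norm_sq]

end

theorem stmt_8_general (m : ℕ) (μ : Fin m → ℝ)
    (S : Matrix (Fin m) (Fin m) ℝ) (hS : S.PosDef)
    (r Q : ℝ) (hr : 0 < r) (hQ : (m : ℝ) / 2 < Q) :
    (∀ x : Fin m → ℝ,
        0 ≤ Real.Gamma Q * S.det ^ (-(1 : ℝ) / 2)
              / ((r * Real.pi) ^ ((m : ℝ) / 2) * Real.Gamma ((2 * Q - m) / 2))
            * (1 + ((x - μ) ⬝ᵥ (S⁻¹ *ᵥ (x - μ))) / r) ^ (-Q)) ∧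
    (∫ x : Fin m → ℝ,
        Real.Gamma Q * S.det ^ (-(1 : ℝ) / 2)
              / ((r * Real.pi) ^ ((m : ℝ) / 2) * Real.Gamma ((2 * Q - m) / 2))
            * (1 + ((x - μ) ⬝ᵥ (S⁻¹ *ᵥ (x - μ))) / r) ^ (-Q)) = 1 := by
  have hΓQ : 0 < Gamma Q := Gamma_pos_of_pos (lt_of_le_of_lt (by positivity) hQ)
  have hΓ : 0 < Gamma ((2 * Q - m) / 2) := Gamma_pos_of_pos (by linarith)
  have hdet : 0 < S.det := hS.det_pos
  refine ⟨fun x => ?_, ?_⟩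
  · have hv : 0 ≤ (x - μ) ⬝ᵥ (S⁻¹ *ᵥ (x - μ)) := by
      simpa using hS.inv.posSemidef.dotProduct_mulVec_nonneg (x - μ)
    positivity
  · rw [integral_const_mul, hS.integral_comp_dotProduct_inv_mulVec μ fun v => (1 + v / r) ^ (-Q),
      smul_eq_mul, integral_one_add_sq_norm_div_rpow_neg hr (by simpa using hQ),
      finrank_euclideanSpace_fin, show Q - m / 2 = (2 * Q - m) / 2 by ring, neg_div,
      rpow_neg hdet.le, sqrt_eq_rpow, one_div]
    field_simp

/-- The Pearson type VII function with location `μ`, positive definite scale `Σ`, and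
parameters `r > 0`, `Q > m/2` is a probability density on `ℝ^m`: it is nonnegative and
integrates to `1` with respect to Lebesgue measure. -/
theorem stmt_8 (m : ℕ) (hm : 0 < m) (μ : Fin m → ℝ)
    (S : Matrix (Fin m) (Fin m) ℝ) (hSsym : S.IsSymm) (hS : S.PosDef)
    (r Q : ℝ) (hr : 0 < r) (hQ : (m : ℝ) / 2 < Q) :
    (∀ x : Fin m → ℝ,
        0 ≤ Real.Gamma Q * S.det ^ (-(1 : ℝ) / 2)
              / ((r * Real.pi) ^ ((m : ℝ) / 2) * Real.Gamma ((2 * Q - m) / 2))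
            * (1 + ((x - μ) ⬝ᵥ (S⁻¹ *ᵥ (x - μ))) / r) ^ (-Q)) ∧
    (∫ x : Fin m → ℝ,
        Real.Gamma Q * S.det ^ (-(1 : ℝ) / 2)
              / ((r * Real.pi) ^ ((m : ℝ) / 2) * Real.Gamma ((2 * Q - m) / 2))
            * (1 + ((x - μ) ⬝ᵥ (S⁻¹ *ᵥ (x - μ))) / r) ^ (-Q)) = 1 :=
  stmt_8_general m μ S hS r Q hr hQ
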